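/- arXiv:2310.13232 — 5 statements merged into one kernel-verified Lean document; each statement's English description precedes it below -/
import Mathlib

section
/- For every real numbers x and a, log(cosh(x+a)/cosh(x)) - a·tanh(x) ≥ (1 - tanh(x)²)·a² / (2 + 2|a|). -/
/-!
Write `s = 1 - tanh x ^ 2 = 1 / cosh x ^ 2`. For `a ≥ 0` we have
`cosh (x + a) ≤ cosh x * exp a`, so the second derivative `1 / cosh (x + a) ^ 2` of
`a ↦ log (cosh (x + a))` is at least `s * exp (-2a)`. Integrating twice from `0` gives
`log (cosh (x + a) / cosh x) - a * tanh x ≥ s * (2a - 1 + exp (-2a)) / 4`, and the bound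
`(2 + c) * exp (-c) ≥ 2 - c` at `c = 2a` turns the right-hand side into `s * a ^ 2 / (2 + 2a)`.
Negative `a` reduce to positive ones through `(x, a) ↦ (-x, -a)`.
-/

open Real Set

theorem le_of_hasDerivAt_nonneg {f f' : ℝ → ℝ} {b a : ℝ} (hf : ∀ y, HasDerivAt f (f' y) y)
    (hf' : ∀ y, b < y → 0 ≤ f' y) (hba : b ≤ a) : f b ≤ f a := by
  refine monotoneOn_of_hasDerivWithinAt_nonneg (convex_Ici b)
    (fun y _ ↦ (hf y).continuousAt.continuousWithinAt) (fun y _ ↦ (hf y).hasDerivWithinAt)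
    (fun y hy ↦ hf' y ?_) self_mem_Ici hba hba
  rwa [interior_Ici] at hy

theorem add_deriv_mul_sub_le_of_hasDerivAt_nonneg {f f' f'' : ℝ → ℝ} {b a : ℝ}
    (hf : ∀ y, HasDerivAt f (f' y) y) (hf' : ∀ y, HasDerivAt f' (f'' y) y)
    (hf'' : ∀ y, b < y → 0 ≤ f'' y) (hba : b ≤ a) : f b + f' b * (a - b) ≤ f a := by
  have hg : ∀ y, HasDerivAt (fun y ↦ f y - f' b * y) (f' y - f' b) y := fun y ↦
    ((hf y).sub ((hasDerivAt_id y).const_mul (f' b))).congr_deriv (by simp)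
  have := le_of_hasDerivAt_nonneg hg
    (fun y hy ↦ sub_nonneg.2 (le_of_hasDerivAt_nonneg hf' hf'' hy.le)) hba
  linarith

theorem two_sub_le_two_add_mul_exp_neg {c : ℝ} (hc : 0 ≤ c) : 2 - c ≤ (2 + c) * exp (-c) := by
  have hd : ∀ y, HasDerivAt (fun y ↦ (2 + y) * exp (-y) + y) (1 - (1 + y) * exp (-y)) y := by
    intro y
    have := (((hasDerivAt_id y).const_add 2).mul (hasDerivAt_neg y).exp).add (hasDerivAt_id y)
    exact this.congr_deriv (by simp only [one_mul, id_eq, mul_neg, mul_one]; ring)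
  have := le_of_hasDerivAt_nonneg hd (fun y _ ↦ ?_) hc
  · simp only [add_zero, neg_zero, exp_zero, mul_one] at this; linarith
  · rw [sub_nonneg, ← le_div_iff₀ (exp_pos _), exp_neg, div_inv_eq_mul, one_mul, add_comm]
    exact add_one_le_exp y

theorem Real.hasDerivAt_tanh (x : ℝ) : HasDerivAt tanh (1 / cosh x ^ 2) x := by
  have h : tanh = fun y ↦ sinh y / cosh y := funext tanh_eq_sinh_div_cosh
  rw [h]
  refine ((hasDerivAt_sinh x).div (hasDerivAt_cosh x) (cosh_pos x).ne').congr_deriv ?_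
  rw [← sq, ← sq, cosh_sq, add_sub_cancel_left]

theorem Real.hasDerivAt_log_cosh (x : ℝ) : HasDerivAt (fun y ↦ log (cosh y)) (tanh x) x := by
  rw [tanh_eq_sinh_div_cosh]
  exact (hasDerivAt_cosh x).log (cosh_pos x).ne'

theorem Real.one_sub_tanh_sq (x : ℝ) : 1 - tanh x ^ 2 = 1 / cosh x ^ 2 := by
  have := (cosh_pos x).ne'
  rw [tanh_eq_sinh_div_cosh]
  field_simp
  linarith [cosh_sq x]

theorem Real.cosh_add_le_cosh_mul_exp (x : ℝ) {s : ℝ} (hs : 0 ≤ s) :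
    cosh (x + s) ≤ cosh x * exp s := by
  have : exp (-(x + s)) ≤ exp (-x + s) := exp_le_exp.2 (by linarith)
  rw [cosh_eq, cosh_eq, div_mul_eq_mul_div, add_mul, ← exp_add, ← exp_add]
  linarith

theorem Real.one_sub_tanh_sq_mul_exp_le (x : ℝ) {s : ℝ} (hs : 0 ≤ s) :
    (1 - tanh x ^ 2) * exp (-(2 * s)) ≤ 1 / cosh (x + s) ^ 2 := by
  have hle : cosh (x + s) ^ 2 ≤ (cosh x * exp s) ^ 2 :=
    pow_le_pow_left₀ (cosh_pos _).le (cosh_add_le_cosh_mul_exp x hs) 2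
  calc (1 - tanh x ^ 2) * exp (-(2 * s)) = 1 / (cosh x * exp s) ^ 2 := by
        rw [one_sub_tanh_sq, exp_neg, mul_pow, ← exp_nat_mul, Nat.cast_ofNat]; ring
    _ ≤ 1 / cosh (x + s) ^ 2 := one_div_le_one_div_of_le (pow_pos (cosh_pos _) 2) hle

theorem Real.le_log_cosh_add (x : ℝ) {a : ℝ} (ha : 0 ≤ a) :
    log (cosh x) + tanh x * a + (1 - tanh x ^ 2) * (2 * a - 1 + exp (-(2 * a))) / 4 ≤
      log (cosh (x + a)) := by
  set s := 1 - tanh x ^ 2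
  have hexp : ∀ y, HasDerivAt (fun y ↦ exp (-(2 * y))) (-2 * exp (-(2 * y))) y := fun y ↦
    (((hasDerivAt_id y).const_mul 2).neg.exp).congr_deriv <| by
      simp only [id_eq, Pi.neg_apply, mul_one, mul_neg, neg_mul, neg_inj]; ring
  have hF : ∀ y, HasDerivAt (fun y ↦ log (cosh (x + y)) - s * (2 * y - 1 + exp (-(2 * y))) / 4)
      (tanh (x + y) - s * (1 - exp (-(2 * y))) / 2) y := by
    intro y
    have := (((hasDerivAt_log_cosh (x + y)).comp_const_add x y).sub
      ((((((hasDerivAt_id y).const_mul 2).sub_const 1).add (hexp y)).const_mul s).div_const 4))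
    exact this.congr_deriv (by simp only [mul_one, neg_mul, sub_right_inj]; ring)
  have hF' : ∀ y, HasDerivAt (fun y ↦ tanh (x + y) - s * (1 - exp (-(2 * y))) / 2)
      (1 / cosh (x + y) ^ 2 - s * exp (-(2 * y))) y := by
    intro y
    have := ((hasDerivAt_tanh (x + y)).comp_const_add x y).sub
      ((((hexp y).const_sub 1).const_mul s).div_const 2)
    exact this.congr_deriv (by ring)
  have := add_deriv_mul_sub_le_of_hasDerivAt_nonneg hF hF'
    (fun y hy ↦ sub_nonneg.2 (one_sub_tanh_sq_mul_exp_le x hy.le)) ha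
  simp only [add_zero, mul_zero, zero_sub, neg_zero, exp_zero, neg_add_cancel, zero_div, sub_zero,
    sub_self] at this
  linarith

theorem logcosh_strong_convexity_of_nonneg (x : ℝ) {a : ℝ} (ha : 0 ≤ a) :
    (1 - tanh x ^ 2) * a ^ 2 / (2 + 2 * a) ≤ log (cosh (x + a) / cosh x) - a * tanh x := by
  have hs : 0 ≤ 1 - tanh x ^ 2 := by rw [one_sub_tanh_sq]; positivity
  have hquad : 4 * a ^ 2 ≤ (2 + 2 * a) * (2 * a - 1 + exp (-(2 * a))) := by
    nlinarith [two_sub_le_two_add_mul_exp_neg (by positivity : 0 ≤ 2 * a)]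
  calc (1 - tanh x ^ 2) * a ^ 2 / (2 + 2 * a)
      ≤ (1 - tanh x ^ 2) * (2 * a - 1 + exp (-(2 * a))) / 4 := by
        rw [div_le_div_iff₀ (by positivity) (by norm_num)]
        nlinarith [mul_le_mul_of_nonneg_left hquad hs]
    _ ≤ log (cosh (x + a) / cosh x) - a * tanh x := by
        rw [log_div (cosh_pos _).ne' (cosh_pos _).ne']
        linarith [le_log_cosh_add x ha]

theorem logcosh_strong_convexity (x a : ℝ) :
    Real.log (Real.cosh (x + a) / Real.cosh x) - a * Real.tanh x ≥
      (1 - Real.tanh x ^ 2) * a ^ 2 / (2 + 2 * |a|) := by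
  rcases le_total 0 a with ha | ha
  · rw [abs_of_nonneg ha]
    exact logcosh_strong_convexity_of_nonneg x ha
  · have := logcosh_strong_convexity_of_nonneg (-x) (neg_nonneg.2 ha)
    rw [← neg_add, cosh_neg, cosh_neg, tanh_neg, neg_sq, neg_sq, neg_mul_neg] at this
    rwa [abs_of_nonpos ha]
end

section
/- For every real numbers x and a, log(cosh(x+a)/cosh(x)) - a·tanh(x) ≥ e^{-2|x|}·a² / (2 + 2|a|). -/
/-!
Write `g_u(t) = cosh t + u sinh t` with `u = tanh x`, so that `cosh (x + a) / cosh x = g_u(a)`.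
The function `t ↦ log g_u(t) - t u` vanishes at `0` and has derivative
`(1 - u²) sinh t / g_u(t)`. For `t ≥ 0` we have `g_u(t) ≤ eᵗ`, so this derivative is at least
`(1 - u²)(1 - e^{-2t})/2 ≥ (1 - u²)(1 - (1 + t)⁻²)/2`, which is the derivative of
`(1 - u²) t² / (2 + 2t)`; negative `a` follow by the symmetry `(u, t) ↦ (-u, -t)`.
Finally `1 - tanh² x = cosh⁻² x ≥ e^{-2|x|}`.
-/

open Real Set

namespace Real

lemma cosh_add_mul_sinh_pos {u : ℝ} (hu : |u| ≤ 1) (t : ℝ) : 0 < cosh t + u * sinh t := by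
  have hsinh : |sinh t| < cosh t :=
    abs_lt.mpr ⟨by linarith [sinh_lt_cosh (-t), sinh_neg t, cosh_neg t], sinh_lt_cosh t⟩
  have hu_sinh : |u * sinh t| ≤ |sinh t| := by
    rw [abs_mul]
    exact mul_le_of_le_one_left (abs_nonneg _) hu
  linarith [neg_abs_le (u * sinh t)]

lemma cosh_add_mul_sinh_le_exp {u t : ℝ} (hu : u ≤ 1) (ht : 0 ≤ t) :
    cosh t + u * sinh t ≤ exp t := by
  nlinarith [cosh_add_sinh t, sinh_nonneg_iff.mpr ht]

lemma hasDerivAt_log_cosh_add_mul_sinh_sub_mul {u : ℝ} (hu : |u| ≤ 1) (t : ℝ) :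
    HasDerivAt (fun s => log (cosh s + u * sinh s) - s * u)
      ((1 - u ^ 2) * (sinh t / (cosh t + u * sinh t))) t := by
  have hg := (cosh_add_mul_sinh_pos hu t).ne'
  have hg' : HasDerivAt (fun s => cosh s + u * sinh s) (sinh t + u * cosh t) t :=
    (hasDerivAt_cosh t).add ((hasDerivAt_sinh t).const_mul u)
  refine ((hg'.log hg).sub (hasDerivAt_mul_const u)).congr_deriv ?_
  rw [mul_div_assoc', div_sub' hg]
  ring

lemma hasDerivAt_sq_div_two_add_two_mul {t : ℝ} (ht : t ≠ -1) :
    HasDerivAt (fun s => s ^ 2 / (2 + 2 * s)) ((1 - ((1 + t) ^ 2)⁻¹) / 2) t := by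
  have h1 : 1 + t ≠ 0 := fun h => ht (by linarith)
  have hden : 2 + 2 * t ≠ 0 := fun h => ht (by linarith)
  have hd : HasDerivAt (fun s : ℝ => 2 + 2 * s) 2 t := by
    simpa using ((hasDerivAt_id t).const_mul 2).const_add 2
  refine ((hasDerivAt_pow 2 t).div hd hden).congr_deriv ?_
  field_simp
  ring

lemma one_sub_inv_one_add_sq_div_two_le_sinh_div {u t : ℝ} (hu : |u| ≤ 1) (ht : 0 ≤ t) :
    (1 - ((1 + t) ^ 2)⁻¹) / 2 ≤ sinh t / (cosh t + u * sinh t) := by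
  have hexp : (1 + t) ^ 2 ≤ exp t ^ 2 := by
    gcongr
    linarith [add_one_le_exp t]
  calc (1 - ((1 + t) ^ 2)⁻¹) / 2 ≤ (1 - (exp t ^ 2)⁻¹) / 2 := by gcongr
    _ = sinh t / exp t := by
      rw [sinh_eq, exp_neg]
      field_simp
    _ ≤ sinh t / (cosh t + u * sinh t) :=
      div_le_div_of_nonneg_left (sinh_nonneg_iff.mpr ht) (cosh_add_mul_sinh_pos hu t)
        (cosh_add_mul_sinh_le_exp (abs_le.mp hu).2 ht)

lemma mul_sq_div_le_log_cosh_add_mul_sinh_sub_mul_of_nonneg {u a : ℝ} (hu : |u| ≤ 1)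
    (ha : 0 ≤ a) : (1 - u ^ 2) * (a ^ 2 / (2 + 2 * a)) ≤ log (cosh a + u * sinh a) - a * u := by
  set F : ℝ → ℝ := fun s =>
    log (cosh s + u * sinh s) - s * u - (1 - u ^ 2) * (s ^ 2 / (2 + 2 * s))
  have hF : ∀ t ∈ Ici (0 : ℝ), HasDerivAt F ((1 - u ^ 2) *
      (sinh t / (cosh t + u * sinh t) - (1 - ((1 + t) ^ 2)⁻¹) / 2)) t := fun t ht => by
    have ht : t ≠ -1 := (neg_one_lt_zero.trans_le ht).ne'
    refine ((hasDerivAt_log_cosh_add_mul_sinh_sub_mul hu t).sub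
      ((hasDerivAt_sq_div_two_add_two_mul ht).const_mul (1 - u ^ 2))).congr_deriv ?_
    ring
  have hmono : MonotoneOn F (Ici 0) := by
    refine monotoneOn_of_hasDerivWithinAt_nonneg (convex_Ici 0)
      (fun t ht => (hF t ht).continuousAt.continuousWithinAt)
      (fun t ht => (hF t (interior_subset ht)).hasDerivWithinAt) fun t ht => ?_
    have ht : 0 ≤ t := interior_subset (s := Ici 0) ht
    exact mul_nonneg (sub_nonneg.mpr ((sq_le_one_iff_abs_le_one u).mpr hu))
      (sub_nonneg.mpr (one_sub_inv_one_add_sq_div_two_le_sinh_div hu ht))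
  simpa [F, sub_nonneg] using hmono self_mem_Ici ha ha

lemma mul_sq_div_le_log_cosh_add_mul_sinh_sub_mul {u : ℝ} (hu : |u| ≤ 1) (a : ℝ) :
    (1 - u ^ 2) * (a ^ 2 / (2 + 2 * |a|)) ≤ log (cosh a + u * sinh a) - a * u := by
  rcases le_or_gt 0 a with ha | ha
  · rw [abs_of_nonneg ha]
    exact mul_sq_div_le_log_cosh_add_mul_sinh_sub_mul_of_nonneg hu ha
  · rw [abs_of_neg ha]
    simpa using mul_sq_div_le_log_cosh_add_mul_sinh_sub_mul_of_nonneg (u := -u)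
      (by rwa [abs_neg]) (neg_nonneg.mpr ha.le)

lemma cosh_add_div_cosh (x a : ℝ) : cosh (x + a) / cosh x = cosh a + tanh x * sinh a := by
  rw [cosh_add, tanh_eq_sinh_div_cosh]
  field_simp

lemma one_sub_tanh_sq_mul_le_log_cosh_add_div_cosh_sub (x a : ℝ) :
    (1 - tanh x ^ 2) * (a ^ 2 / (2 + 2 * |a|)) ≤ log (cosh (x + a) / cosh x) - a * tanh x := by
  rw [cosh_add_div_cosh]
  exact mul_sq_div_le_log_cosh_add_mul_sinh_sub_mul (abs_tanh_lt_one x).le a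

lemma cosh_le_exp_abs (x : ℝ) : cosh x ≤ exp |x| := by
  rw [← cosh_abs, ← cosh_add_sinh]
  linarith [sinh_nonneg_iff.mpr (abs_nonneg x)]

lemma exp_neg_two_mul_abs_le_one_sub_tanh_sq (x : ℝ) : exp (-2 * |x|) ≤ 1 - tanh x ^ 2 := by
  have hcosh := (cosh_pos x).ne'
  have htanh : 1 - tanh x ^ 2 = (cosh x ^ 2)⁻¹ := by
    rw [tanh_eq_sinh_div_cosh]
    field_simp
    linarith [cosh_sq x]
  have hexp : exp (-2 * |x|) = (exp |x| ^ 2)⁻¹ := by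
    rw [← exp_nat_mul, ← exp_neg]
    norm_num
  rw [htanh, hexp]
  gcongr
  exact cosh_le_exp_abs x

end Real

theorem logcosh_strong_convexity_exp (x a : ℝ) :
    Real.log (Real.cosh (x + a) / Real.cosh x) - a * Real.tanh x ≥
      Real.exp (-2 * |x|) * a ^ 2 / (2 + 2 * |a|) := by
  rw [ge_iff_le, mul_div_assoc]
  calc exp (-2 * |x|) * (a ^ 2 / (2 + 2 * |a|))
      ≤ (1 - tanh x ^ 2) * (a ^ 2 / (2 + 2 * |a|)) := by
        gcongr
        exact exp_neg_two_mul_abs_le_one_sub_tanh_sq x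
    _ ≤ log (cosh (x + a) / cosh x) - a * tanh x :=
        one_sub_tanh_sq_mul_le_log_cosh_add_div_cosh_sub x a
end

section
/- For every real number x, there exists δ > 0 such that for all a with 0 < a < δ one has cosh(x)²·(1+a)³ > cosh(x+a)², and for all a > δ one has cosh(x)²·(1+a)³ < cosh(x+a)². -/
/-!
Taking logarithms, the claim is that `h(a) = 2 log cosh (x + a) - 3 log (1 + a) - 2 log cosh x`
is negative on `(0, δ)` and positive on `(δ, ∞)`. Its derivative `2 tanh (x + a) - 3 / (1 + a)`
is strictly increasing, so `h` is strictly convex; moreover `h 0 = 0`, `h' 0 = 2 tanh x - 3 < 0`,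
and `h a ≥ a - C` because `cosh y ≥ eʸ / 2` and `log (1 + a) ≤ log 3 + (1 + a) / 3 - 1`.
A strictly convex function on `[0, ∞)` vanishing at `0` which takes both signs changes sign
exactly once, at the supremum of the points where it is nonpositive.
-/

open Real Set Filter

theorem Real.tanh_strictMono : StrictMono tanh := fun s t hst => by
  by_contra! h
  have := artanh_le_artanh (neg_one_lt_tanh t) (tanh_lt_one s) h
  rw [artanh_tanh, artanh_tanh] at this
  exact hst.not_ge this

theorem Real.sub_log_two_le_log_cosh (y : ℝ) : y - log 2 ≤ log (cosh y) := by
  have hexp : exp y / 2 ≤ cosh y := by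
    rw [cosh_eq]
    linarith [exp_pos (-y)]
  calc y - log 2 = log (exp y / 2) := by rw [log_div (exp_ne_zero y) two_ne_zero, log_exp]
    _ ≤ log (cosh y) := log_le_log (by positivity) hexp

theorem exists_lt_of_hasDerivWithinAt_neg {f : ℝ → ℝ} {f' x : ℝ}
    (hf : HasDerivWithinAt f f' (Ici x) x) (hf' : f' < 0) : ∃ z > x, f z < f x := by
  obtain ⟨z, hslope, hxz⟩ :=
    ((hf.liminf_right_slope_le hf').and_eventually self_mem_nhdsWithin).exists
  refine ⟨z, hxz, ?_⟩
  rw [slope_def_field, div_neg_iff] at hslope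
  rcases hslope with ⟨-, h⟩ | ⟨h, -⟩
  · linarith [show x < z from hxz]
  · linarith

namespace StrictConvexOn

variable {f : ℝ → ℝ}

theorem neg_of_lt_of_nonpos (hf : StrictConvexOn ℝ (Ici 0) f) (hf0 : f 0 = 0) {b c : ℝ}
    (hb : 0 < b) (hbc : b < c) (hc : f c ≤ 0) : f b < 0 := by
  have hsecant := hf.secant_strict_mono self_mem_Ici hb.le (hb.trans hbc).le hb.ne'
    (hb.trans hbc).ne' hbc
  simp only [hf0, sub_zero] at hsecant
  have : f b / b < 0 := hsecant.trans_le (div_nonpos_of_nonpos_of_nonneg hc (hb.trans hbc).le)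
  exact (div_neg_iff.mp this).elim (fun h => absurd h.2 hb.not_gt) (·.1)

theorem exists_sign_change (hf : StrictConvexOn ℝ (Ici 0) f) (hf0 : f 0 = 0) {a b : ℝ}
    (ha : 0 < a) (hfa : f a < 0) (hb : 0 < b) (hfb : 0 < f b) :
    ∃ δ > 0, (∀ c, 0 < c → c < δ → f c < 0) ∧ ∀ c > δ, 0 < f c := by
  set S := {c | 0 < c ∧ f c ≤ 0}
  have haS : a ∈ S := ⟨ha, hfa.le⟩
  have hbdd : BddAbove S := ⟨b, fun c hc => not_lt.mp fun hbc =>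
    (hf.neg_of_lt_of_nonpos hf0 hb hbc hc.2).not_gt hfb⟩
  refine ⟨sSup S, ha.trans_le (le_csSup hbdd haS), fun c hc hcδ => ?_, fun c hcδ => ?_⟩
  · obtain ⟨d, hdS, hcd⟩ := exists_lt_of_lt_csSup ⟨a, haS⟩ hcδ
    exact hf.neg_of_lt_of_nonpos hf0 hc hcd hdS.2
  · by_contra! hfc
    exact (le_csSup hbdd ⟨(ha.trans_le (le_csSup hbdd haS)).trans hcδ, hfc⟩).not_gt hcδ

end StrictConvexOn

noncomputable def logRatio (x a : ℝ) : ℝ :=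
  2 * log (cosh (x + a)) - 3 * log (1 + a) - 2 * log (cosh x)

section

variable (x : ℝ)

theorem logRatio_zero : logRatio x 0 = 0 := by simp [logRatio]

theorem hasDerivAt_logRatio {a : ℝ} (ha : -1 < a) :
    HasDerivAt (logRatio x) (2 * tanh (x + a) - 3 / (1 + a)) a := by
  have hcosh : HasDerivAt (fun a => cosh (x + a)) (sinh (x + a)) a := by
    simpa using ((hasDerivAt_id a).const_add x).cosh
  have hlin : HasDerivAt (fun a => 1 + a) 1 a := (hasDerivAt_id a).const_add 1
  refine ((((hcosh.log (cosh_pos _).ne').const_mul 2).sub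
    ((hlin.log (by linarith)).const_mul 3)).sub_const (2 * log (cosh x))).congr_deriv ?_
  rw [tanh_eq_sinh_div_cosh]
  ring

theorem strictConvexOn_logRatio : StrictConvexOn ℝ (Ioi (-1)) (logRatio x) := by
  refine StrictMonoOn.strictConvexOn_of_deriv (convex_Ioi _)
    (fun a ha => (hasDerivAt_logRatio x ha).continuousAt.continuousWithinAt) ?_
  rw [interior_Ioi]
  intro a ha b hb hab
  rw [(hasDerivAt_logRatio x ha).deriv, (hasDerivAt_logRatio x hb).deriv]
  have h1a : (0 : ℝ) < 1 + a := by linarith [mem_Ioi.mp ha]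
  have := div_lt_div_of_pos_left three_pos h1a (by linarith : 1 + a < 1 + b)
  linarith [tanh_strictMono (by linarith : x + a < x + b)]

theorem add_le_logRatio {a : ℝ} (ha : -1 < a) :
    a + (2 * x + 2 - 2 * log 2 - 3 * log 3 - 2 * log (cosh x)) ≤ logRatio x a := by
  have hlog : log (1 + a) ≤ log 3 + (1 + a) / 3 - 1 := by
    have := log_le_sub_one_of_pos (by linarith : 0 < (1 + a) / 3)
    rw [log_div (by linarith) three_ne_zero] at this
    linarith
  have := sub_log_two_le_log_cosh (x + a)
  rw [logRatio]
  linarith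

theorem tendsto_logRatio_atTop : Tendsto (logRatio x) atTop atTop :=
  tendsto_atTop_mono' atTop ((eventually_gt_atTop (-1)).mono fun _ => add_le_logRatio x)
    (tendsto_atTop_add_const_right _ _ tendsto_id)

theorem logRatio_eq_log_sub_log {a : ℝ} (ha : -1 < a) :
    logRatio x a = log (cosh (x + a) ^ 2) - log (cosh x ^ 2 * (1 + a) ^ 3) := by
  rw [log_mul (by positivity) (pow_ne_zero _ (by linarith)), log_pow, log_pow, log_pow, logRatio]
  push_cast
  ring

theorem logRatio_neg_iff {a : ℝ} (ha : -1 < a) :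
    logRatio x a < 0 ↔ cosh (x + a) ^ 2 < cosh x ^ 2 * (1 + a) ^ 3 := by
  have h1a : 0 < 1 + a := by linarith
  rw [logRatio_eq_log_sub_log x ha, sub_neg, log_lt_log_iff (by positivity) (by positivity)]

theorem logRatio_pos_iff {a : ℝ} (ha : -1 < a) :
    0 < logRatio x a ↔ cosh x ^ 2 * (1 + a) ^ 3 < cosh (x + a) ^ 2 := by
  have h1a : 0 < 1 + a := by linarith
  rw [logRatio_eq_log_sub_log x ha, sub_pos, log_lt_log_iff (by positivity) (by positivity)]

end

theorem cosh_cubic_sign_change (x : ℝ) :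
    ∃ δ > 0,
      (∀ a : ℝ, 0 < a → a < δ → Real.cosh x ^ 2 * (1 + a) ^ 3 > Real.cosh (x + a) ^ 2) ∧
      (∀ a : ℝ, a > δ → Real.cosh x ^ 2 * (1 + a) ^ 3 < Real.cosh (x + a) ^ 2) := by
  have hconvex := (strictConvexOn_logRatio x).subset (Ici_subset_Ioi.mpr neg_one_lt_zero)
    (convex_Ici 0)
  have hderiv : 2 * tanh (x + 0) - 3 / (1 + 0) < 0 := by
    linarith [tanh_lt_one (x + 0)]
  obtain ⟨a, ha, hfa⟩ := exists_lt_of_hasDerivWithinAt_neg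
    (hasDerivAt_logRatio x neg_one_lt_zero).hasDerivWithinAt hderiv
  obtain ⟨b, hfb, hb⟩ :=
    ((tendsto_logRatio_atTop x).eventually_gt_atTop 0 |>.and (eventually_gt_atTop 0)).exists
  rw [logRatio_zero] at hfa
  obtain ⟨δ, hδ, hsmall, hlarge⟩ := hconvex.exists_sign_change (logRatio_zero x) ha hfa hb hfb
  refine ⟨δ, hδ, fun c hc hcδ => ?_, fun c hcδ => ?_⟩
  · exact (logRatio_neg_iff x (by linarith)).mp (hsmall c hc hcδ)
  · exact (logRatio_pos_iff x (by linarith)).mp (hlarge c hcδ)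
end

section
/- For every real number x, there exists L > 0 such that the function a ↦ 3·cosh(x)²·(1+a)² - sinh(2x+2a) is strictly positive on (0, L) and strictly negative on (L, ∞). -/
/-! Since `sinh` is increasing, `c (1 + a)² - sinh (d + 2a)` has the sign of
`f a = arsinh (c (1 + a)²) - d - 2a`. From `arsinh (k v) ≤ arsinh v + log k` for `k ≥ 1`,
`arsinh (c u²)` grows from `u = r` to `u = s` by at most `2 log (s / r) < 2 (s - r) / r`, so `f` is
strictly decreasing on `a ≥ 0` and tends to `-∞`. With `f 0 > 0`, which for `c = 3 cosh² x`,
`d = 2x` is `sinh (2x) < cosh (2x) ≤ 2 cosh² x`, the intermediate value theorem gives the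
sign change. -/

open Real Set

lemma Real.arsinh_mul_le {k : ℝ} (hk : 1 ≤ k) (v : ℝ) :
    arsinh (k * v) ≤ arsinh v + log k := by
  have hsqrt : √(1 + (k * v) ^ 2) ≤ k * √(1 + v ^ 2) := by
    rw [Real.sqrt_le_iff, mul_pow, mul_pow, Real.sq_sqrt (by positivity)]
    exact ⟨by positivity, by nlinarith⟩
  rw [← exp_le_exp, exp_add, exp_log (by linarith), exp_arsinh, exp_arsinh]
  linarith

lemma Real.arsinh_mul_sq_lt (c : ℝ) {r s : ℝ} (hr : 0 < r) (hrs : r < s) :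
    arsinh (c * s ^ 2) < arsinh (c * r ^ 2) + 2 * ((s - r) / r) := by
  have hratio : 1 < s / r := (one_lt_div hr).2 hrs
  have hscale : c * s ^ 2 = (s / r) ^ 2 * (c * r ^ 2) := by field_simp
  calc arsinh (c * s ^ 2)
      ≤ arsinh (c * r ^ 2) + log ((s / r) ^ 2) :=
        hscale ▸ arsinh_mul_le (one_le_pow₀ hratio.le) _
    _ = arsinh (c * r ^ 2) + 2 * log (s / r) := by rw [log_pow]; norm_num
    _ < arsinh (c * r ^ 2) + 2 * (s / r - 1) := by
        gcongr; exact log_lt_sub_one_of_pos (by linarith) hratio.ne'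
    _ = arsinh (c * r ^ 2) + 2 * ((s - r) / r) := by rw [sub_div, div_self hr.ne']

lemma Real.sinh_two_mul_lt_three_mul_cosh_sq (x : ℝ) : sinh (2 * x) < 3 * cosh x ^ 2 := by
  have := sinh_lt_cosh (2 * x)
  rw [cosh_two_mul, cosh_sq] at this
  rw [cosh_sq]
  linarith [sq_nonneg (sinh x)]

lemma exists_pos_sign_change_of_strictAntiOn {f : ℝ → ℝ} (hcont : ContinuousOn f (Ici 0))
    (hanti : StrictAntiOn f (Ici 0)) (h0 : 0 < f 0) {A : ℝ} (hA : 0 ≤ A) (hfA : f A < 0) :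
    ∃ L > 0, (∀ a, 0 < a → a < L → 0 < f a) ∧ ∀ a, L < a → f a < 0 := by
  obtain ⟨L, ⟨hL0, -⟩, hfL⟩ :=
    intermediate_value_Icc' hA (hcont.mono Icc_subset_Ici_self) ⟨hfA.le, h0.le⟩
  have hL : 0 < L := hL0.lt_of_ne (by rintro rfl; linarith)
  refine ⟨L, hL, fun a ha haL => ?_, fun a haL => ?_⟩
  · exact hfL ▸ hanti (mem_Ici.2 ha.le) (mem_Ici.2 hL0) haL
  · exact hfL ▸ hanti (mem_Ici.2 hL0) (mem_Ici.2 (hL0.trans haL.le)) haL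

lemma exists_pos_sign_change_mul_sq_sub_sinh {c d : ℝ} (h0 : sinh d < c) :
    ∃ L > 0, (∀ a, 0 < a → a < L → 0 < c * (1 + a) ^ 2 - sinh (d + 2 * a)) ∧
      ∀ a, L < a → c * (1 + a) ^ 2 - sinh (d + 2 * a) < 0 := by
  let f a := arsinh (c * (1 + a) ^ 2) - (d + 2 * a)
  have hanti : StrictAntiOn f (Ici 0) := by
    intro a (ha : 0 ≤ a) b _ hab
    have hquot : (b - a) / (1 + a) ≤ b - a := div_le_self (by linarith) (by linarith)
    have := arsinh_mul_sq_lt c (by linarith : 0 < 1 + a) (by linarith : 1 + a < 1 + b)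
    rw [add_sub_add_left_eq_sub] at this
    simp only [f]
    linarith
  have hf0 : 0 < f 0 := by
    have : d < arsinh c := by rwa [← sinh_lt_sinh, sinh_arsinh]
    simp only [f]
    norm_num
    linarith
  obtain ⟨A, hA2, hA⟩ : ∃ A, 2 ≤ A ∧ arsinh (c * 2 ^ 2) - d ≤ A :=
    ⟨_, le_max_left _ _, le_max_right _ _⟩
  have hfA : f A < 0 := by
    have : arsinh (c * (1 + A) ^ 2) < arsinh (c * 2 ^ 2) + (A - 1) :=
      (arsinh_mul_sq_lt c two_pos (by linarith)).trans_eq (by ring)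
    simp only [f]
    linarith
  obtain ⟨L, hL, hpos, hneg⟩ :=
    exists_pos_sign_change_of_strictAntiOn (by fun_prop) hanti hf0 (by positivity) hfA
  refine ⟨L, hL, fun a ha haL => ?_, fun a haL => ?_⟩
  · have := hpos a ha haL
    rw [sub_pos, ← arsinh_lt_arsinh, arsinh_sinh]
    simp only [f] at this
    linarith
  · have := hneg a haL
    rw [sub_neg, ← arsinh_lt_arsinh, arsinh_sinh]
    simp only [f] at this
    linarith

theorem deriv_sign_change (x : ℝ) :
    ∃ L > 0,
      (∀ a : ℝ, 0 < a → a < L → 0 < 3 * Real.cosh x ^ 2 * (1 + a) ^ 2 - Real.sinh (2 * x + 2 * a)) ∧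
      (∀ a : ℝ, L < a → 3 * Real.cosh x ^ 2 * (1 + a) ^ 2 - Real.sinh (2 * x + 2 * a) < 0) :=
  exists_pos_sign_change_mul_sq_sub_sinh (sinh_two_mul_lt_three_mul_cosh_sq x)
end

section
/- Let N ≥ 1, d > 0, α > 0, and let Q, Q̂ be symmetric N×N real matrices. Suppose v ∈ ℝ^N satisfies ‖v‖₁ ≤ 4√d·‖v‖₂, vᵀQv ≥ α‖v‖₂², and |Q̂_{ij} - Q_{ij}| ≤ α/(32d) for all i,j. Then vᵀQ̂v ≥ (α/2)·‖v‖₂². -/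
/-!
An entrywise bound `ε` on `Q̂ - Q` bounds its quadratic form by `ε ‖v‖₁²`, and on the cone
`‖v‖₁² ≤ 16 d ‖v‖₂²`; with `ε = α / (32 d)` the perturbation therefore costs at most
`(α / 2) ‖v‖₂²` of the lower bound `α ‖v‖₂²`.
-/

open Finset

section QuadForm

variable {ι R : Type*} [Fintype ι] [CommRing R]

def quadForm (M : Matrix ι ι R) (v : ι → R) : R := ∑ i, ∑ j, v i * M i j * v j

theorem quadForm_sub (A B : Matrix ι ι R) (v : ι → R) :
    quadForm (A - B) v = quadForm A v - quadForm B v := by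
  simp only [quadForm, Matrix.sub_apply, mul_sub, sub_mul, sum_sub_distrib]

theorem abs_quadForm_le_of_abs_apply_le [LinearOrder R] [IsStrictOrderedRing R]
    {M : Matrix ι ι R} {ε : R} (hM : ∀ i j, |M i j| ≤ ε) (v : ι → R) : |quadForm M v| ≤ ε * (∑ i, |v i|) ^ 2 := by
  calc |quadForm M v| ≤ ∑ i, ∑ j, |v i * M i j * v j| :=
        (abs_sum_le_sum_abs _ _).trans (sum_le_sum fun i _ => abs_sum_le_sum_abs _ _)
    _ ≤ ∑ i, ∑ j, |v i| * ε * |v j| := by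
        gcongr with i _ j _
        rw [abs_mul, abs_mul]
        gcongr
        exact hM i j
    _ = ε * (∑ i, |v i|) ^ 2 := by
        rw [sq, sum_mul_sum, mul_sum]
        simp only [mul_sum]
        exact sum_congr rfl fun i _ => sum_congr rfl fun j _ => by ring

end QuadForm

theorem sq_le_of_le_mul_sqrt_mul_sqrt {a c d s : ℝ} (ha : 0 ≤ a) (hd : 0 ≤ d) (hs : 0 ≤ s)
    (h : a ≤ c * √d * √s) : a ^ 2 ≤ c ^ 2 * d * s := by
  calc a ^ 2 ≤ (c * √d * √s) ^ 2 := pow_le_pow_left₀ ha h 2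
    _ = c ^ 2 * d * s := by rw [mul_pow, mul_pow, Real.sq_sqrt hd, Real.sq_sqrt hs]

theorem restricted_eigenvalue_transfer_general (N : ℕ) (d α : ℝ)
    (hd : 0 < d) (hα : 0 < α)
    (Q Qhat : Matrix (Fin N) (Fin N) ℝ)
    (v : Fin N → ℝ)
    (hcone : ∑ i, |v i| ≤ 4 * Real.sqrt d * Real.sqrt (∑ i, v i ^ 2))
    (hre : ∑ i, ∑ j, v i * Q i j * v j ≥ α * ∑ i, v i ^ 2)
    (hperturb : ∀ i j, |Qhat i j - Q i j| ≤ α / (32 * d)) :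
    ∑ i, ∑ j, v i * Qhat i j * v j ≥ (α / 2) * ∑ i, v i ^ 2 := by
  have hl1 : (∑ i, |v i|) ^ 2 ≤ 4 ^ 2 * d * ∑ i, v i ^ 2 :=
    sq_le_of_le_mul_sqrt_mul_sqrt (sum_nonneg fun i _ => abs_nonneg _) hd.le
      (sum_nonneg fun i _ => sq_nonneg _) hcone
  have herr := abs_quadForm_le_of_abs_apply_le (M := Qhat - Q) hperturb v
  rw [quadForm_sub] at herr
  simp only [quadForm] at herr
  have hcost : α / (32 * d) * (∑ i, |v i|) ^ 2 ≤ (α / 2) * ∑ i, v i ^ 2 :=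
    calc α / (32 * d) * (∑ i, |v i|) ^ 2 ≤ α / (32 * d) * (4 ^ 2 * d * ∑ i, v i ^ 2) := by
          gcongr
      _ = (α / 2) * ∑ i, v i ^ 2 := by field_simp; ring
  linarith [(abs_le.mp herr).1]

theorem restricted_eigenvalue_transfer (N : ℕ) (hN : 1 ≤ N) (d α : ℝ)
    (hd : 0 < d) (hα : 0 < α)
    (Q Qhat : Matrix (Fin N) (Fin N) ℝ) (hQ : Q.IsSymm) (hQhat : Qhat.IsSymm)
    (v : Fin N → ℝ)
    (hcone : ∑ i, |v i| ≤ 4 * Real.sqrt d * Real.sqrt (∑ i, v i ^ 2))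
    (hre : ∑ i, ∑ j, v i * Q i j * v j ≥ α * ∑ i, v i ^ 2)
    (hperturb : ∀ i j, |Qhat i j - Q i j| ≤ α / (32 * d)) :
    ∑ i, ∑ j, v i * Qhat i j * v j ≥ (α / 2) * ∑ i, v i ^ 2 :=
  restricted_eigenvalue_transfer_general N d α hd hα Q Qhat v hcone hre hperturb
end
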